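/- Let k > l ≥ 1 be integers. Then every solution of the equation [u₁,v₁]⋯[u_k,v_k] = ([x,y])^{k+l} ([x,y]^y)^{k−l} in F₂ is primitive: if u₁, v₁, …, u_k, v_k ∈ F₂ satisfy [u₁,v₁]⋯[u_k,v_k] = ([x,y])^{k+l} ([x,y]^y)^{k−l}, then p(⟨u₁, v₁, …, u_k, v_k⟩) = F₂/[F₂,F₂]. -/

import Mathlib

/-!
If the images of the `uᵢ, vᵢ` do not generate the abelianization, some homomorphism `χ` from `F₂`
to an abelian group `Q` kills every `uᵢ, vᵢ` but not both `x` and `y`. Lift `χ` to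
`F₂ → ℤ[Q] ⋊ Q`, `x ↦ (U, χ x)`, `y ↦ (V, χ y)`. The `uᵢ, vᵢ` land in the abelian normal subgroup
`ℤ[Q]`, so the left-hand side maps to `1`, whereas `B` maps to `D = (χ x - 1) V - (χ y - 1) U` and
the right-hand side to `((k + l) + (k - l) χ y) D`. The coefficient of `1` in the latter is
nonzero when `D = c - 1` with `c ≠ 1`, which is attained with `c = χ x` or `c = χ y`.
-/

namespace SurfaceEq

open scoped commutatorElement

/-- The free group on two generators. -/
abbrev F2 : Type := FreeGroup (Fin 2)

/-- The first generator `x` of `F₂`. -/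
def x : F2 := FreeGroup.of 0

/-- The second generator `y` of `F₂`. -/
def y : F2 := FreeGroup.of 1

/-- `B = [x,y]`. -/
def B : F2 := ⁅x, y⁆

end SurfaceEq

namespace SemidirectProduct

open scoped commutatorElement

variable {N G : Type*} [CommGroup N] [Group G] {φ : G →* MulAut N}

theorem commutatorElement_eq_one_of_rightHom_eq_one {g h : N ⋊[φ] G}
    (hg : rightHom g = 1) (hh : rightHom h = 1) : ⁅g, h⁆ = 1 := by
  have h_inl : ∀ g : N ⋊[φ] G, rightHom g = 1 → g = inl g.left := fun g hg => by
    ext <;> simp_all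
  rw [h_inl g hg, h_inl h hh, ← map_commutatorElement,
    commutatorElement_eq_one_iff_commute.mpr (Commute.all _ _), map_one]

theorem map_prod_commutatorElement_eq_one {F : Type*} [Group F] {k : ℕ} (f : F →* N ⋊[φ] G)
    (u v : Fin k → F) (hu : ∀ i, rightHom (f (u i)) = 1) (hv : ∀ i, rightHom (f (v i)) = 1) :
    f (List.ofFn fun i => ⁅u i, v i⁆).prod = 1 := by
  rw [map_list_prod, List.map_ofFn]
  refine List.prod_eq_one fun g hg => ?_
  obtain ⟨i, rfl⟩ := List.mem_ofFn.mp hg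
  exact (map_commutatorElement f _ _).trans
    (commutatorElement_eq_one_of_rightHom_eq_one (hu i) (hv i))

theorem mul_inl_mul_inv (g : N ⋊[φ] G) (n : N) : g * inl n * g⁻¹ = inl (φ g.right n) := by
  ext <;> simp [mul_comm]

theorem commutatorElement_inl_mul_inr {G : Type*} [CommGroup G] {φ : G →* MulAut N}
    (U V : N) (a b : G) :
    ⁅(inl U * inr a : N ⋊[φ] G), (inl V * inr b : N ⋊[φ] G)⁆ =
      inl (U * φ a V * (φ b U)⁻¹ * V⁻¹) := by
  have hφ : φ a * φ b = φ b * φ a := by rw [← map_mul, mul_comm, map_mul]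
  ext <;> simp [commutatorElement_def, hφ]

end SemidirectProduct

namespace MonoidAlgebra

theorem natCast_add_mul_of_mul_of_sub_one_ne_zero {Q : Type*} [Monoid Q] {m n : ℕ} (hnm : n < m)
    (b : Q) {c : Q} (hc : c ≠ 1) :
    ((m : MonoidAlgebra ℤ Q) + n * of ℤ Q b) * (of ℤ Q c - 1) ≠ 0 := by
  classical
  intro h
  -- the coefficient of `1` is `-m`, `-m + n` or `-m - n`
  have h_one := congrArg (fun z : MonoidAlgebra ℤ Q => z.coeff 1) h
  simp only [add_mul, mul_sub, natCast_def, of_apply, single_mul_single, one_def] at h_one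
  simp [Finsupp.single_apply, hc] at h_one
  split_ifs at h_one with hbc hb <;> [exact hc (by simpa [hb] using hbc); omega; omega; omega]

noncomputable def leftRegularAction (R Q : Type*) [Ring R] [Group Q] :
    Q →* MulAut (Multiplicative (MonoidAlgebra R Q)) :=
  (MulAutMultiplicative _).symm.toMonoidHom.comp
    ((DistribMulAction.toAddAut _ _).comp (of R Q).toHomUnits)

theorem leftRegularAction_apply {R Q : Type*} [Ring R] [Group Q] (q : Q)
    (U : Multiplicative (MonoidAlgebra R Q)) :
    leftRegularAction R Q q U = .ofAdd (of R Q q * U.toAdd) := rfl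

end MonoidAlgebra

namespace SurfaceEq

open scoped commutatorElement
open MonoidAlgebra SemidirectProduct

theorem hom_ext {M : Type*} [Monoid M] {f g : F2 →* M} (hx : f x = g x) (hy : f y = g y) :
    f = g :=
  FreeGroup.ext_hom f g fun i => by fin_cases i <;> assumption

variable {Q : Type*} [CommGroup Q]

noncomputable def affineLift (χ : F2 →* Q) (U V : MonoidAlgebra ℤ Q) :
    F2 →* Multiplicative (MonoidAlgebra ℤ Q) ⋊[leftRegularAction ℤ Q] Q :=
  FreeGroup.lift ![inl (.ofAdd U) * inr (χ x), inl (.ofAdd V) * inr (χ y)]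

variable (χ : F2 →* Q) (U V : MonoidAlgebra ℤ Q)

theorem affineLift_x : affineLift χ U V x = inl (.ofAdd U) * inr (χ x) := by
  simp [affineLift, x]

theorem affineLift_y : affineLift χ U V y = inl (.ofAdd V) * inr (χ y) := by
  simp [affineLift, y]

theorem rightHom_comp_affineLift : rightHom.comp (affineLift χ U V) = χ :=
  hom_ext (by simp [affineLift_x]) (by simp [affineLift_y])

theorem affineLift_B : affineLift χ U V B =
    inl (.ofAdd ((of ℤ Q (χ x) - 1) * V - (of ℤ Q (χ y) - 1) * U)) := by
  rw [B, map_commutatorElement, affineLift_x, affineLift_y, commutatorElement_inl_mul_inr]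
  simp only [leftRegularAction_apply, toAdd_ofAdd, ← ofAdd_neg, ← ofAdd_add]
  congr 2
  ring

theorem groupRing_eq_zero_of_commutator_prod_eq {k l : ℕ} (u v : Fin k → F2)
    (hu : ∀ i, χ (u i) = 1) (hv : ∀ i, χ (v i) = 1)
    (huv : (List.ofFn fun i => ⁅u i, v i⁆).prod = B ^ (k + l) * (y * B * y⁻¹) ^ (k - l)) :
    (((k + l : ℕ) : MonoidAlgebra ℤ Q) + (k - l : ℕ) * of ℤ Q (χ y)) *
      ((of ℤ Q (χ x) - 1) * V - (of ℤ Q (χ y) - 1) * U) = 0 := by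
  set f := affineLift χ U V
  have hright (g : F2) : (f g).right = χ g :=
    DFunLike.congr_fun (rightHom_comp_affineLift χ U V) g
  have h := congrArg f huv
  rw [map_prod_commutatorElement_eq_one f u v (by simpa [hright]) (by simpa [hright]), map_mul,
    map_pow, map_pow, map_mul, map_mul, map_inv, affineLift_B, mul_inl_mul_inv, hright,
    ← map_pow inl, ← map_pow inl, ← map_mul inl, eq_comm, ← map_one inl] at h
  have h_add := congrArg Multiplicative.toAdd (inl_injective h)
  simp only [leftRegularAction_apply, ← ofAdd_nsmul, ← ofAdd_add, toAdd_ofAdd, toAdd_one,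
    nsmul_eq_mul] at h_add
  linear_combination h_add

theorem monoidHom_eq_one_of_commutator_prod_eq {k l : ℕ} (hl : 1 ≤ l) (u v : Fin k → F2)
    (hu : ∀ i, χ (u i) = 1) (hv : ∀ i, χ (v i) = 1)
    (huv : (List.ofFn fun i => ⁅u i, v i⁆).prod = B ^ (k + l) * (y * B * y⁻¹) ^ (k - l)) :
    χ = 1 := by
  have h_lt : k - l < k + l := by omega
  refine hom_ext ?_ ?_
  · by_contra hx
    apply natCast_add_mul_of_mul_of_sub_one_ne_zero h_lt (χ y) hx
    simpa using groupRing_eq_zero_of_commutator_prod_eq χ 0 1 u v hu hv huv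
  · by_contra hy
    apply natCast_add_mul_of_mul_of_sub_one_ne_zero h_lt (χ y) hy
    simpa using groupRing_eq_zero_of_commutator_prod_eq χ (-1) 0 u v hu hv huv

theorem every_solution_primitive_general (k l : ℕ) (hl : 1 ≤ l)
    (u v : Fin k → F2)
    (huv : (List.ofFn fun i => ⁅u i, v i⁆).prod =
      B ^ (k + l) * (y * B * y⁻¹) ^ (k - l)) :
    Subgroup.map (Abelianization.of : F2 →* Abelianization F2)
        (Subgroup.closure (Set.range u ∪ Set.range v)) = ⊤ := by
  set H := Subgroup.map Abelianization.of (Subgroup.closure (Set.range u ∪ Set.range v))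
  have h_mem (g : F2) (hg : g ∈ Set.range u ∪ Set.range v) : Abelianization.of g ∈ H :=
    Subgroup.mem_map_of_mem _ (Subgroup.subset_closure hg)
  have hχ := monoidHom_eq_one_of_commutator_prod_eq
    ((QuotientGroup.mk' H).comp Abelianization.of) hl u v
    (fun i => (QuotientGroup.eq_one_iff _).mpr (h_mem _ (.inl ⟨i, rfl⟩)))
    (fun i => (QuotientGroup.eq_one_iff _).mpr (h_mem _ (.inr ⟨i, rfl⟩))) huv
  rw [eq_top_iff]
  rintro g -
  induction g using QuotientGroup.induction_on with
  | H g => exact (QuotientGroup.eq_one_iff _).mp (DFunLike.congr_fun hχ g)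

/-- Let `k > l ≥ 1` be integers. Then every solution of the equation
`[u₁,v₁]⋯[u_k,v_k] = B^{k+l}·(B^y)^{k−l}` in `F₂` is primitive:
`p(⟨u₁,v₁,…,u_k,v_k⟩) = F₂/[F₂,F₂]`. -/
theorem every_solution_primitive (k l : ℕ) (hl : 1 ≤ l) (hkl : l < k)
    (u v : Fin k → F2)
    (huv : (List.ofFn fun i => ⁅u i, v i⁆).prod =
      B ^ (k + l) * (y * B * y⁻¹) ^ (k - l)) :
    Subgroup.map (Abelianization.of : F2 →* Abelianization F2)
        (Subgroup.closure (Set.range u ∪ Set.range v)) = ⊤ :=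
  every_solution_primitive_general k l hl u v huv

end SurfaceEq
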